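/- Let M_{ij} = f(dist(i,j)) on the full binary tree of depth L, and fix an internal node u. If x is any function supported on the subtree T(u), antisymmetric under swapping the two child subtrees of u, and constant on each relative-depth layer within each child subtree, then Mx vanishes identically outside T(u). -/

import Mathlib

/-- Nodes of the full (perfect) binary tree of depth `L`: a node is a depth `ℓ ≤ L`
together with an index among the `2^ℓ` nodes at that depth.  The children of node
`(ℓ, k)` are `(ℓ+1, 2k)` and `(ℓ+1, 2k+1)`. -/
abbrev BTNode (L : ℕ) := Σ ℓ : Fin (L + 1), Fin (2 ^ (ℓ : ℕ))

namespace BTNode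

variable {L : ℕ}

/-- Depth of a node. -/
def depth (n : BTNode L) : ℕ := n.1

/-- Index (among the `2^a` nodes at depth `a`) of the ancestor of `n` at depth
`a ≤ depth n`. -/
def anc (n : BTNode L) (a : ℕ) : ℕ := (n.2 : ℕ) / 2 ^ (depth n - a)

/-- Depth of the lowest common ancestor of two nodes. -/
def lcaDepth (i j : BTNode L) : ℕ :=
  Nat.findGreatest (fun a => anc i a = anc j a) (min (depth i) (depth j))

/-- Graph distance on the tree: `dist i j = depth i + depth j - 2·depth(LCA)`. -/
def dist (i j : BTNode L) : ℕ := depth i + depth j - 2 * lcaDepth i j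

/-- `i` is an ancestor of (or equal to) `j`. -/
def IsAncestor (i j : BTNode L) : Prop :=
  depth i ≤ depth j ∧ anc j (depth i) = (i.2 : ℕ)

/-- `n` lies in the subtree `T(u)` rooted at `u`. -/
def InSubtree (u n : BTNode L) : Prop := IsAncestor u n

/-- Scaling mode `φ_ℓ`: normalized indicator of the depth-`ℓ` layer, with value
`2^{-ℓ/2}` on that layer. -/
noncomputable def scalingMode (ℓ : Fin (L + 1)) (n : BTNode L) : ℝ :=
  if depth n = (ℓ : ℕ) then ((Real.sqrt 2)⁻¹) ^ (ℓ : ℕ) else 0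

/-- Haar wavelet mode `ψ_{u,r}`: supported on the descendants of `u` at relative depth
`r`, with value `+2^{-r/2}` below the first child of `u` (even child index) and
`-2^{-r/2}` below the second child (odd child index). -/
noncomputable def waveletMode (u : BTNode L) (r : ℕ) (n : BTNode L) : ℝ :=
  if depth n = depth u + r ∧ anc n (depth u) = (u.2 : ℕ) then
    (if anc n (depth u + 1) % 2 = 0 then 1 else -1) * ((Real.sqrt 2)⁻¹) ^ r
  else 0

end BTNode

/-!
Let `σ` be the swap of the two child subtrees of `u`. Seen from a node `i` outside `T(u)`, the
lowest common ancestor of `i` and `j ∈ T(u)` lies on the path from `u` to the root, so `σ` preserves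
`dist i ·`; it is also a permutation of the nodes under which `x` is odd. Reindexing the sum
`∑ j, f (dist i j) * x j` by `σ` therefore turns it into its own negative.
-/

namespace Nat

theorem findGreatest_congr {P Q : ℕ → Prop} [DecidablePred P] [DecidablePred Q] :
    ∀ {b : ℕ}, (∀ a ≤ b, (P a ↔ Q a)) → findGreatest P b = findGreatest Q b
  | 0, _ => rfl
  | b + 1, h => by
    rw [findGreatest_succ, findGreatest_succ,
      findGreatest_congr fun a ha => h a (le_succ_of_le ha)]
    exact if_congr (h _ le_rfl) rfl rfl

theorem xor_two_pow_div_two_pow_of_lt (k : ℕ) {p q : ℕ} (h : p < q) :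
    (k ^^^ 2 ^ p) / 2 ^ q = k / 2 ^ q := by
  refine eq_of_testBit_eq fun i => ?_
  simp only [testBit_div_two_pow, testBit_xor, testBit_two_pow]
  simp [show p ≠ i + q by omega]

theorem xor_two_pow_div_two_pow_ne (k p : ℕ) : (k ^^^ 2 ^ p) / 2 ^ p ≠ k / 2 ^ p := by
  intro h
  have := congrArg (testBit · 0) h
  simp only [testBit_div_two_pow, testBit_xor, testBit_two_pow, Nat.zero_add] at this
  simp at this

end Nat

namespace BTNode

variable {L : ℕ}

theorem eq_of_depth_eq_of_val_eq {m n : BTNode L} (hd : depth m = depth n) (hv : (m.2 : ℕ) = n.2) :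
    m = n := by
  obtain ⟨⟨a, ha⟩, ⟨k, hk⟩⟩ := m
  obtain ⟨⟨b, hb⟩, ⟨l, hl⟩⟩ := n
  simp only [depth] at hd hv
  subst hd hv
  rfl

theorem anc_eq_anc_div (n : BTNode L) {a b : ℕ} (hb : b ≤ a) (ha : a ≤ depth n) :
    anc n b = anc n a / 2 ^ (a - b) := by
  rw [anc, anc, Nat.div_div_eq_div_mul, ← pow_add]
  congr 2
  omega

theorem anc_eq_of_anc_eq {m n : BTNode L} {a b : ℕ} (hb : b ≤ a) (hm : a ≤ depth m)
    (hn : a ≤ depth n) (h : anc m a = anc n a) : anc m b = anc n b := by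
  rw [anc_eq_anc_div m hb hm, anc_eq_anc_div n hb hn, h]

/-- `n` lies in one of the two child subtrees of `u`. -/
def InProperSubtree (u n : BTNode L) : Prop :=
  depth u < depth n ∧ anc n (depth u) = (u.2 : ℕ)

instance : DecidableRel (InProperSubtree (L := L)) := fun _ _ =>
  inferInstanceAs (Decidable (_ ∧ _))

theorem InProperSubtree.inSubtree {u n : BTNode L} (h : InProperSubtree u n) : InSubtree u n :=
  ⟨h.1.le, h.2⟩

theorem eq_of_inSubtree_of_not_inProperSubtree {u n : BTNode L} (hn : InSubtree u n)
    (hn' : ¬ InProperSubtree u n) : n = u := by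
  have hd : depth n = depth u := by
    by_contra hne
    exact hn' ⟨lt_of_le_of_ne hn.1 (Ne.symm hne), hn.2⟩
  refine eq_of_depth_eq_of_val_eq hd ?_
  simpa [anc, hd] using hn.2

theorem anc_ne_of_not_inSubtree {u i n : BTNode L} (hi : ¬ InSubtree u i)
    (hn : InProperSubtree u n) {a : ℕ} (hua : depth u < a) (hai : a ≤ depth i)
    (han : a ≤ depth n) : anc i a ≠ anc n a := fun h =>
  hi ⟨by omega, (anc_eq_of_anc_eq hua.le hai han h).trans hn.2⟩

/-- At depth `depth u + r + 1` the two child subtrees of `u` are told apart by bit `r` of the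
index. -/
def childSwap (u j : BTNode L) : BTNode L :=
  if h : InProperSubtree u j then
    ⟨j.1, ⟨(j.2 : ℕ) ^^^ 2 ^ (depth j - depth u - 1),
      Nat.xor_lt_two_pow j.2.isLt
        (Nat.pow_lt_pow_right one_lt_two (by have := h.1; simp only [depth] at this ⊢; omega))⟩⟩
  else j

variable {u : BTNode L}

theorem childSwap_of_not_inProperSubtree {j : BTNode L} (hj : ¬ InProperSubtree u j) :
    childSwap u j = j :=
  dif_neg hj

theorem val_childSwap {j : BTNode L} (hj : InProperSubtree u j) :
    ((childSwap u j).2 : ℕ) = (j.2 : ℕ) ^^^ 2 ^ (depth j - depth u - 1) := by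
  rw [childSwap, dif_pos hj]

@[simp]
theorem depth_childSwap (j : BTNode L) : depth (childSwap u j) = depth j := by
  unfold childSwap
  split <;> rfl

theorem anc_childSwap_of_le (j : BTNode L) {a : ℕ} (ha : a ≤ depth u) :
    anc (childSwap u j) a = anc j a := by
  by_cases hj : InProperSubtree u j
  · rw [anc, val_childSwap hj, depth_childSwap]
    exact Nat.xor_two_pow_div_two_pow_of_lt _ (by have := hj.1; omega)
  · rw [childSwap_of_not_inProperSubtree hj]

theorem anc_childSwap_child_ne {j : BTNode L} (hj : InProperSubtree u j) :
    anc (childSwap u j) (depth u + 1) ≠ anc j (depth u + 1) := by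
  rw [anc, anc, val_childSwap hj, depth_childSwap,
    show depth j - (depth u + 1) = depth j - depth u - 1 by omega]
  exact Nat.xor_two_pow_div_two_pow_ne _ _

theorem InProperSubtree.childSwap {j : BTNode L} (hj : InProperSubtree u j) :
    InProperSubtree u (childSwap u j) :=
  ⟨(depth_childSwap j).symm ▸ hj.1, (anc_childSwap_of_le j le_rfl).trans hj.2⟩

theorem childSwap_involutive (u : BTNode L) : Function.Involutive (childSwap u) := by
  intro j
  by_cases hj : InProperSubtree u j
  · refine eq_of_depth_eq_of_val_eq (by simp) ?_
    rw [val_childSwap hj.childSwap, val_childSwap hj, depth_childSwap, Nat.xor_assoc,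
      Nat.xor_self, Nat.xor_zero]
  · rw [childSwap_of_not_inProperSubtree hj, childSwap_of_not_inProperSubtree hj]

theorem lcaDepth_childSwap {i : BTNode L} (hi : ¬ InSubtree u i) (j : BTNode L) :
    lcaDepth i (childSwap u j) = lcaDepth i j := by
  rw [lcaDepth, lcaDepth, depth_childSwap]
  refine Nat.findGreatest_congr fun a ha => ?_
  have hai : a ≤ depth i := ha.trans (min_le_left _ _)
  have haj : a ≤ depth j := ha.trans (min_le_right _ _)
  by_cases hua : a ≤ depth u
  · rw [anc_childSwap_of_le j hua]
  by_cases hj : InProperSubtree u j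
  · have haj' : a ≤ depth (childSwap u j) := (depth_childSwap j).symm ▸ haj
    exact iff_of_false (anc_ne_of_not_inSubtree hi hj.childSwap (by omega) hai haj')
      (anc_ne_of_not_inSubtree hi hj (by omega) hai haj)
  · rw [childSwap_of_not_inProperSubtree hj]

theorem dist_childSwap {i : BTNode L} (hi : ¬ InSubtree u i) (j : BTNode L) :
    dist i (childSwap u j) = dist i j := by
  rw [dist, dist, depth_childSwap, lcaDepth_childSwap hi]

end BTNode

theorem distance_kernel_annihilates_split_vectors_outside_subtree_general
    (L : ℕ) (f : ℕ → ℝ) (u : BTNode L)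
    (x : BTNode L → ℝ)
    (hsupp : ∀ n : BTNode L, ¬ BTNode.InSubtree u n → x n = 0)
    (hroot : x u = 0)
    (hanti : ∀ n n' : BTNode L,
      BTNode.InSubtree u n → BTNode.InSubtree u n' →
      BTNode.depth u < BTNode.depth n → BTNode.depth n = BTNode.depth n' →
      BTNode.anc n (BTNode.depth u + 1) ≠ BTNode.anc n' (BTNode.depth u + 1) →
      x n = -x n') :
    ∀ i : BTNode L, ¬ BTNode.InSubtree u i →
      ∑ j : BTNode L, f (BTNode.dist i j) * x j = 0 := by
  intro i hi
  have hodd : ∀ j, x (BTNode.childSwap u j) = -x j := by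
    intro j
    by_cases hj : BTNode.InProperSubtree u j
    · exact hanti _ _ hj.childSwap.inSubtree hj.inSubtree hj.childSwap.1 (BTNode.depth_childSwap j)
        (BTNode.anc_childSwap_child_ne hj)
    · have hx : x j = 0 := by
        by_cases hs : BTNode.InSubtree u j
        · rw [BTNode.eq_of_inSubtree_of_not_inProperSubtree hs hj, hroot]
        · exact hsupp j hs
      rw [BTNode.childSwap_of_not_inProperSubtree hj, hx, neg_zero]
  have hreindex := Equiv.sum_comp (BTNode.childSwap_involutive u).toPerm
    fun j => f (i.dist j) * x j
  simp only [Function.Involutive.coe_toPerm, BTNode.dist_childSwap hi, hodd, mul_neg,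
    Finset.sum_neg_distrib] at hreindex
  linarith

/-- let `M_{ij} = f(dist(i,j))` on the full binary tree of depth `L`, and
fix an internal node `u`.  If `x` is supported on the subtree `T(u)`, vanishes at `u`
itself, is constant on each relative-depth layer within each child subtree of `u`, and is
antisymmetric under swapping the two child subtrees (opposite values on the two sides of
the split at `u`, at equal depths), then `Mx` vanishes identically outside `T(u)`.
Here `anc n (depth u + 1)` identifies the child of `u` whose subtree contains `n`. -/
theorem distance_kernel_annihilates_split_vectors_outside_subtree
    (L : ℕ) (f : ℕ → ℝ) (u : BTNode L) (hu : BTNode.depth u < L)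
    (x : BTNode L → ℝ)
    (hsupp : ∀ n : BTNode L, ¬ BTNode.InSubtree u n → x n = 0)
    (hroot : x u = 0)
    (hconst : ∀ n n' : BTNode L,
      BTNode.InSubtree u n → BTNode.InSubtree u n' →
      BTNode.depth u < BTNode.depth n → BTNode.depth n = BTNode.depth n' →
      BTNode.anc n (BTNode.depth u + 1) = BTNode.anc n' (BTNode.depth u + 1) →
      x n = x n')
    (hanti : ∀ n n' : BTNode L,
      BTNode.InSubtree u n → BTNode.InSubtree u n' →
      BTNode.depth u < BTNode.depth n → BTNode.depth n = BTNode.depth n' →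
      BTNode.anc n (BTNode.depth u + 1) ≠ BTNode.anc n' (BTNode.depth u + 1) →
      x n = -x n') :
    ∀ i : BTNode L, ¬ BTNode.InSubtree u i →
      ∑ j : BTNode L, f (BTNode.dist i j) * x j = 0 :=
  distance_kernel_annihilates_split_vectors_outside_subtree_general L f u x hsupp hroot hanti
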